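/- Let m, k be integers with 1 ≤ k < m, and let ḡ_{(m,k)} be the associated function on 𝔽_3^m. For every v ∈ 𝔽_3^m with wt(v) = i ≥ 1, the real part of the Walsh transform of ḡ_{(m,k)} at v equals (3/2)·Ψ_k(i, m). -/

import Mathlib

open Finset

/-- `ζ = exp(2πi/3)`, a primitive cube root of unity. -/
noncomputable def zeta3 : ℂ := Complex.exp (2 * Real.pi * Complex.I / 3)

/-- The Walsh transform of `h : 𝔽_3^m → 𝔽_3` at `w ∈ 𝔽_3^m`:
`ĥ(w) = Σ_{x ∈ 𝔽_3^m} ζ^{h(x) - w·x}`. -/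
noncomputable def walsh {m : ℕ} (h : (Fin m → ZMod 3) → ZMod 3)
    (w : Fin m → ZMod 3) : ℂ :=
  ∑ x : Fin m → ZMod 3, zeta3 ^ (h x - ∑ i, w i * x i).val

/-- The function `ḡ_{(m,k)} : 𝔽_3^m → 𝔽_3`: `1` if `wt(x) > k`, `0` if `wt(x) ≤ k`. -/
def gbar {m : ℕ} (k : ℕ) (x : Fin m → ZMod 3) : ZMod 3 :=
  if k < hammingNorm x then 1 else 0

/-- The ternary Krawtchouk polynomial
`K_t(i,m) = Σ_{j=0}^{t} (-1)^j·2^{t-j}·C(i,j)·C(m-i,t-j)`. -/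
def kraw (t i m : ℕ) : ℤ :=
  ∑ j ∈ Finset.range (t + 1),
    (-1 : ℤ) ^ j * 2 ^ (t - j) * (i.choose j : ℤ) * ((m - i).choose (t - j) : ℤ)

/-- The Lloyd polynomial `Ψ_k(i,m) = Σ_{t=0}^{k} K_t(i,m)`. -/
def lloyd (k i m : ℕ) : ℤ := ∑ t ∈ Finset.range (k + 1), kraw t i m

/-! With `ψ` the standard additive character of `𝔽₃` and `ζ = ψ 1`, we have
`ζ^{ḡ(x)} = ζ + (1 - ζ)·[wt x ≤ k]`, so
`ĝ(v) = ζ·Σ_x ψ(-v·x) + (1 - ζ)·Σ_{wt x ≤ k} ψ(-v·x)`.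
The first sum vanishes because `v ≠ 0`. For the second, the weight enumerator
`Σ_x ψ(w·x) X^{wt x}` factors over the coordinates as `(1 - X)^{wt w} (1 + 2X)^{m - wt w}`,
whose `t`-th coefficient is `K_t(wt w, m)`; summing over `t ≤ k` gives `Ψ_k(i, m)`.
Finally `Re(1 - ζ) = 3/2`. -/

open Polynomial

lemma AddChar.map_sum_eq_prod {A M ι : Type*} [AddCommMonoid A] [CommMonoid M] (ψ : AddChar A M)
    (s : Finset ι) (f : ι → A) : ψ (∑ i ∈ s, f i) = ∏ i ∈ s, ψ (f i) := by
  induction s using Finset.cons_induction with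
  | empty => simp
  | cons a s ha ih => rw [sum_cons, prod_cons, ψ.map_add_eq_mul, ih]

section Hamming

variable {ι β : Type*} [Fintype ι] [DecidableEq β]

lemma hammingNorm_neg [AddGroup β] (x : ι → β) : hammingNorm (-x) = hammingNorm x :=
  hammingNorm_comp (fun _ => Neg.neg) (fun _ => neg_injective) (fun _ => neg_zero)

variable [Zero β]

lemma X_pow_hammingNorm {S : Type*} [CommSemiring S] (x : ι → β) :
    (X : S[X]) ^ hammingNorm x = ∏ s, X ^ (if x s = 0 then 0 else 1) := by
  simp only [Finset.prod_pow_eq_pow_sum, hammingNorm, Finset.card_filter, ne_eq, ite_not]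

lemma card_filter_eq_zero_eq_sub_hammingNorm (w : ι → β) :
    #{s | w s = 0} = Fintype.card ι - hammingNorm w := by
  rw [hammingNorm, ← Finset.card_univ,
    ← Finset.card_filter_add_card_filter_not (s := univ) (p := fun s => w s = 0)]
  simp

end Hamming

section Coefficients

variable {S : Type*}

lemma coeff_one_add_C_mul_X_pow [CommSemiring S] (c : S) (n t : ℕ) :
    ((1 + C c * X) ^ n).coeff t = c ^ t * n.choose t := by
  have : (1 + C c * X) ^ n = ((1 + X) ^ n).comp (C c * X) := by simp
  rw [this, comp_C_mul_X_coeff, coeff_one_add_X_pow, mul_comm]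

lemma coeff_one_sub_X_pow_mul_one_add_C_mul_X_pow [CommRing S] (c : S) (i n t : ℕ) :
    ((1 - X) ^ i * (1 + C c * X) ^ n).coeff t =
      ∑ j ∈ range (t + 1), (-1) ^ j * c ^ (t - j) * i.choose j * n.choose (t - j) := by
  rw [show (1 - X : S[X]) = 1 + C (-1) * X by simp [sub_eq_add_neg], coeff_mul,
    Nat.sum_antidiagonal_eq_sum_range_succ_mk]
  refine Finset.sum_congr rfl fun j _ => ?_
  rw [coeff_one_add_C_mul_X_pow, coeff_one_add_C_mul_X_pow]
  ring

variable {α : Type*} [Fintype α]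

lemma sum_range_coeff_sum_C_mul_X_pow [Semiring S] (f : α → S) (d : α → ℕ) (k : ℕ) :
    ∑ t ∈ range (k + 1), (∑ x, C (f x) * X ^ d x).coeff t = ∑ x with d x ≤ k, f x := by
  simp_rw [finsetSum_coeff, coeff_C_mul_X_pow]
  rw [Finset.sum_comm, Finset.sum_filter]
  refine Finset.sum_congr rfl fun x _ => ?_
  simp

lemma eval_one_sum_C_mul_X_pow [CommSemiring S] (f : α → S) (d : α → ℕ) :
    (∑ x, C (f x) * X ^ d x).eval 1 = ∑ x, f x := by
  simp [eval_finsetSum]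

end Coefficients

section WeightEnumerator

variable {R R' : Type*} [CommRing R] [Fintype R] [DecidableEq R] [CommRing R'] [IsDomain R']
  {ψ : AddChar R R'}

lemma sum_addChar_mul_C_mul_X_pow_ite (hψ : ψ.IsPrimitive) (b : R) :
    ∑ a : R, C (ψ (b * a)) * X ^ (if a = 0 then 0 else 1) =
      if b = 0 then 1 + C ((Fintype.card R : R') - 1) * X else 1 - X := by
  have hrest := AddChar.sum_mulShift b hψ
  rw [Fintype.sum_eq_add_sum_compl 0, zero_mul, AddChar.map_zero_eq_one] at hrest
  simp only [mul_comm _ b] at hrest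
  rw [Fintype.sum_eq_add_sum_compl 0, if_pos rfl, mul_zero, AddChar.map_zero_eq_one, map_one,
    pow_zero, mul_one,
    Finset.sum_congr rfl fun a (ha : a ∈ ({0}ᶜ : Finset R)) => by
      rw [if_neg (by simpa using ha), pow_one],
    ← Finset.sum_mul, ← map_sum, eq_sub_of_add_eq' hrest]
  split_ifs <;> simp [sub_eq_add_neg]

variable {ι : Type*} [Fintype ι] [DecidableEq ι]

theorem sum_addChar_dotProduct_mul_X_pow_hammingNorm (hψ : ψ.IsPrimitive) (w : ι → R) :
    ∑ x : ι → R, C (ψ (w ⬝ᵥ x)) * X ^ hammingNorm x =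
      (1 - X) ^ hammingNorm w *
        (1 + C ((Fintype.card R : R') - 1) * X) ^ (Fintype.card ι - hammingNorm w) := by
  have hfactor : ∀ x : ι → R, C (ψ (w ⬝ᵥ x)) * X ^ hammingNorm x =
      ∏ s, C (ψ (w s * x s)) * X ^ (if x s = 0 then 0 else 1) := by
    intro x
    rw [dotProduct, AddChar.map_sum_eq_prod, map_prod, X_pow_hammingNorm, Finset.prod_mul_distrib]
  simp_rw [hfactor]
  rw [← Fintype.prod_sum (fun s a => C (ψ (w s * a)) * X ^ (if a = 0 then 0 else 1))]
  simp_rw [sum_addChar_mul_C_mul_X_pow_ite hψ]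
  rw [Finset.prod_ite, Finset.prod_const, Finset.prod_const,
    card_filter_eq_zero_eq_sub_hammingNorm, hammingNorm, mul_comm]

theorem sum_addChar_dotProduct_eq_zero (hψ : ψ.IsPrimitive) {w : ι → R} (hw : w ≠ 0) :
    ∑ x : ι → R, ψ (w ⬝ᵥ x) = 0 := by
  rw [← eval_one_sum_C_mul_X_pow _ hammingNorm, sum_addChar_dotProduct_mul_X_pow_hammingNorm hψ,
    eval_mul, eval_pow, eval_sub, eval_one, eval_X, sub_self,
    zero_pow (hammingNorm_ne_zero_iff.mpr hw), zero_mul]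

theorem sum_hammingNorm_le_addChar_dotProduct (hψ : ψ.IsPrimitive) (w : ι → R) (k : ℕ) :
    ∑ x with hammingNorm x ≤ k, ψ (w ⬝ᵥ x) =
      ∑ t ∈ range (k + 1), ∑ j ∈ range (t + 1),
        (-1) ^ j * ((Fintype.card R : R') - 1) ^ (t - j) *
          (hammingNorm w).choose j * (Fintype.card ι - hammingNorm w).choose (t - j) := by
  simp_rw [← sum_range_coeff_sum_C_mul_X_pow, sum_addChar_dotProduct_mul_X_pow_hammingNorm hψ,
    coeff_one_sub_X_pow_mul_one_add_C_mul_X_pow]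

end WeightEnumerator

section Ternary

open ZMod

lemma zeta3_pow_val (a : ZMod 3) : zeta3 ^ a.val = stdAddChar a := by
  rw [stdAddChar_apply, toCircle_apply, zeta3, ← Complex.exp_nat_mul]
  congr 1
  push_cast
  ring

lemma re_one_sub_stdAddChar_one : (1 - stdAddChar (1 : ZMod 3)).re = 3 / 2 := by
  rw [← zeta3_pow_val, ZMod.val_one, pow_one, zeta3,
    show 2 * (Real.pi : ℂ) * Complex.I / 3 = ((Real.pi - Real.pi / 3 : ℝ) : ℂ) * Complex.I by
      push_cast; ring,
    Complex.sub_re, Complex.one_re, Complex.exp_ofReal_mul_I_re, Real.cos_pi_sub,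
    Real.cos_pi_div_three]
  norm_num

lemma walsh_eq_sum_stdAddChar {m : ℕ} (h : (Fin m → ZMod 3) → ZMod 3) (w : Fin m → ZMod 3) :
    walsh h w = ∑ x, stdAddChar (h x) * stdAddChar (-w ⬝ᵥ x) := by
  refine Finset.sum_congr rfl fun x _ => ?_
  rw [zeta3_pow_val, ← AddChar.map_add_eq_mul, neg_dotProduct, ← sub_eq_add_neg]
  rfl

lemma stdAddChar_gbar {m : ℕ} (k : ℕ) (x : Fin m → ZMod 3) :
    stdAddChar (gbar k x) =
      stdAddChar (1 : ZMod 3) +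
        (1 - stdAddChar (1 : ZMod 3)) * if hammingNorm x ≤ k then 1 else 0 := by
  unfold gbar
  split_ifs <;> first | omega | simp

lemma walsh_gbar {m : ℕ} (k : ℕ) (v : Fin m → ZMod 3) :
    walsh (gbar k) v = stdAddChar (1 : ZMod 3) * ∑ x, stdAddChar (-v ⬝ᵥ x) +
      (1 - stdAddChar (1 : ZMod 3)) * ∑ x with hammingNorm x ≤ k, stdAddChar (-v ⬝ᵥ x) := by
  rw [walsh_eq_sum_stdAddChar, Finset.mul_sum, Finset.mul_sum, Finset.sum_filter,
    ← Finset.sum_add_distrib]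
  refine Finset.sum_congr rfl fun x _ => ?_
  rw [stdAddChar_gbar]
  split_ifs <;> ring

lemma sum_hammingNorm_le_stdAddChar_dotProduct {m i : ℕ} {w : Fin m → ZMod 3}
    (hw : hammingNorm w = i) (k : ℕ) :
    ∑ x with hammingNorm x ≤ k, stdAddChar (w ⬝ᵥ x) = (lloyd k i m : ℂ) := by
  rw [sum_hammingNorm_le_addChar_dotProduct (isPrimitive_stdAddChar 3), hw, ZMod.card,
    Fintype.card_fin, lloyd]
  simp only [kraw]
  push_cast
  norm_num

end Ternary

theorem stmt_14_general (m k : ℕ)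
    (v : Fin m → ZMod 3) (i : ℕ) (hvi : hammingNorm v = i) (hi1 : 1 ≤ i) :
    (walsh (gbar (m := m) k) v).re = 3 / 2 * (lloyd k i m : ℝ) := by
  have hnorm : hammingNorm (-v) = i := (hammingNorm_neg v).trans hvi
  have hne : -v ≠ 0 := hammingNorm_pos_iff.mp (by omega)
  rw [walsh_gbar, sum_addChar_dotProduct_eq_zero (ZMod.isPrimitive_stdAddChar 3) hne, mul_zero,
    zero_add, sum_hammingNorm_le_stdAddChar_dotProduct hnorm, ← Complex.ofReal_intCast,
    Complex.re_mul_ofReal, re_one_sub_stdAddChar_one]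

/-- For `1 ≤ k < m` and `v ∈ 𝔽_3^m` of Hamming weight `i ≥ 1`,
`Re(ḡ̂_{(m,k)}(v)) = (3/2)·Ψ_k(i,m)`. -/
theorem stmt_14 (m k : ℕ) (hk1 : 1 ≤ k) (hkm : k < m)
    (v : Fin m → ZMod 3) (i : ℕ) (hvi : hammingNorm v = i) (hi1 : 1 ≤ i) :
    (walsh (gbar (m := m) k) v).re = 3 / 2 * (lloyd k i m : ℝ) :=
  stmt_14_general m k v i hvi hi1
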